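/- For every n ≥ 3, VP_n is the internal semidirect product V_n^* ⋊ VP_{n−1}: the subgroup V_n^* is normal in VP_n, its intersection with the image ι_n(VP_{n−1}) is trivial, and every element b ∈ VP_n has a unique factorization b = w · ι_n(v) with w ∈ V_n^* and v ∈ VP_{n−1}. -/

import Mathlib

/-- Generators of the pure virtual braid group `VP n`: ordered pairs of distinct
indices, the pair `(i, j)` corresponding to the generator `λ_{ij}`. -/
def Gen (n : ℕ) : Type := {p : Fin n × Fin n // p.1 ≠ p.2}

instance (n : ℕ) : DecidableEq (Gen n) :=
  fun a b => decidable_of_iff (a.1 = b.1) Subtype.ext_iff.symm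

/-- The generator `λ_{ij}` inside the free group on the generators. -/
def lamF {n : ℕ} {i j : Fin n} (h : i ≠ j) : FreeGroup (Gen n) :=
  FreeGroup.of ⟨(i, j), h⟩

/-- `s(ab) = 1` if `a < b`, and `-1` otherwise. -/
def sgn {n : ℕ} (a b : Fin n) : ℤ := if a < b then 1 else -1

/-- The defining relators of the pure virtual braid group `VP n`:
(1) `λ_{jk} λ_{im} = λ_{im} λ_{jk}` for pairwise distinct `i, j, k, m`;
(2) `λ_{ki}^{s(ki)} λ_{kj}^{s(kj)} λ_{ij}^{s(ij)} = λ_{ij}^{s(ij)} λ_{kj}^{s(kj)} λ_{ki}^{s(ki)}`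
for pairwise distinct `i, j, k`. -/
def vpRels (n : ℕ) : Set (FreeGroup (Gen n)) :=
  {r | ∃ (i j k m : Fin n) (hjk : j ≠ k) (him : i ≠ m),
      i ≠ j ∧ i ≠ k ∧ j ≠ m ∧ k ≠ m ∧
      r = lamF hjk * lamF him * (lamF hjk)⁻¹ * (lamF him)⁻¹} ∪
  {r | ∃ (i j k : Fin n) (hki : k ≠ i) (hkj : k ≠ j) (hij : i ≠ j),
      r = (lamF hki ^ sgn k i * lamF hkj ^ sgn k j * lamF hij ^ sgn i j) *
          (lamF hij ^ sgn i j * lamF hkj ^ sgn k j * lamF hki ^ sgn k i)⁻¹}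

/-- The pure virtual braid group on `n` strands, as a presented group. -/
abbrev VP (n : ℕ) : Type := PresentedGroup (vpRels n)

/-- The generator `λ_{ij}` of `VP n`. -/
def lam {n : ℕ} {i j : Fin n} (h : i ≠ j) : VP n := PresentedGroup.of ⟨(i, j), h⟩

/-- The order-preserving inclusion of indices `{1,…,n−1} ⊆ {1,…,n}`. -/
def emb (n : ℕ) : Fin (n - 1) → Fin n := Fin.castLE (Nat.sub_le n 1)

/-- The last index `n` (in one-based numbering) of `Fin n`. -/
def lastIdx (n : ℕ) (hn : 0 < n) : Fin n := ⟨n - 1, by omega⟩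

/-- The set `{λ_{in}, λ_{ni} : 1 ≤ i ≤ n−1}` whose normal closure is `V_n^*`. -/
def VstarSet (n : ℕ) (hn : 0 < n) : Set (VP n) :=
  {x | ∃ (i : Fin n) (hi : i ≠ lastIdx n hn), x = lam hi ∨ x = lam hi.symm}

/-!
Forgetting the last strand (`λ_{ij} ↦ λ_{ij}` if `i, j < n`, and `λ_{ij} ↦ 1` otherwise)
respects the relators, so it defines `π : VP n →* VP (n-1)` with `π ∘ ι_n = id`. The kernel
of `π` is `V_n^*`: the generators of `V_n^*` die under `π`, and conversely every generator
`λ_{ij}` agrees with `ι_n (π λ_{ij})` modulo `V_n^*`, hence so does every `b`. A group with a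
retraction `π` of `ι` is the internal semidirect product `ker π ⋊ range ι`.
-/

theorem Fin.castLT_ne_castLT {m n : ℕ} {i j : Fin m} (h : i ≠ j) (hi : i.val < n)
    (hj : j.val < n) : i.castLT hi ≠ j.castLT hj :=
  fun he => h (Fin.ext (by simpa using congrArg Fin.val he))

namespace MonoidHom

variable {G H : Type*} [Group G] [Group H] {π : G →* H} {ι : H →* G}

theorem ker_inf_range_eq_bot_of_leftInverse (h : Function.LeftInverse π ι) :
    π.ker ⊓ ι.range = ⊥ := by
  rw [eq_bot_iff]
  rintro _ ⟨hx, v, rfl⟩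
  have hv : π (ι v) = 1 := hx
  rw [h v] at hv
  simp [hv]

theorem existsUnique_ker_mul_of_leftInverse (h : Function.LeftInverse π ι) (b : G) :
    ∃! p : π.ker × H, b = p.1 * ι p.2 := by
  refine ⟨(⟨b * (ι (π b))⁻¹, by simp [h (π b)]⟩, π b), by simp, ?_⟩
  rintro ⟨w, v⟩ rfl
  have hw : π w = 1 := w.2
  have hv : π (w * ι v) = v := by rw [map_mul, hw, one_mul, h v]
  ext <;> simp [hv]

end MonoidHom

namespace VP

variable {n : ℕ}

theorem mk_eq_one_of_mem_vpRels {r : FreeGroup (Gen n)} (hr : r ∈ vpRels n) :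
    PresentedGroup.mk (vpRels n) r = 1 :=
  PresentedGroup.mk_eq_one_iff.mpr (Subgroup.subset_normalClosure hr)

theorem lift_lamF {G : Type*} [Group G] (f : Gen n → G) {i j : Fin n} (h : i ≠ j) :
    FreeGroup.lift f (lamF h) = f ⟨(i, j), h⟩ :=
  FreeGroup.lift_apply_of

theorem commute_lam_lam {i j k m : Fin n} (hjk : j ≠ k) (him : i ≠ m)
    (hij : i ≠ j) (hik : i ≠ k) (hjm : j ≠ m) (hkm : k ≠ m) :
    Commute (lam hjk) (lam him) := by
  have h := mk_eq_one_of_mem_vpRels (Or.inl ⟨i, j, k, m, hjk, him, hij, hik, hjm, hkm, rfl⟩)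
  simp only [map_mul, map_inv] at h
  exact commutatorElement_eq_one_iff_mul_comm.mp h

theorem lam_zpow_reidemeisterIII {i j k : Fin n} (hki : k ≠ i) (hkj : k ≠ j) (hij : i ≠ j) :
    lam hki ^ sgn k i * lam hkj ^ sgn k j * lam hij ^ sgn i j =
      lam hij ^ sgn i j * lam hkj ^ sgn k j * lam hki ^ sgn k i := by
  have h := mk_eq_one_of_mem_vpRels (Or.inr ⟨i, j, k, hki, hkj, hij, rfl⟩)
  simp only [map_mul, map_inv, map_zpow, mul_inv_eq_one] at h
  exact h

def forgetLastGen (n : ℕ) (g : Gen n) : VP (n - 1) :=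
  if h : g.1.1.val < n - 1 ∧ g.1.2.val < n - 1 then lam (Fin.castLT_ne_castLT g.2 h.1 h.2)
  else 1

theorem forgetLastGen_of_lt {i j : Fin n} (h : i ≠ j) (hi : i.val < n - 1) (hj : j.val < n - 1) :
    forgetLastGen n ⟨(i, j), h⟩ = lam (Fin.castLT_ne_castLT h hi hj) :=
  dif_pos ⟨hi, hj⟩

theorem forgetLastGen_of_not_lt {i j : Fin n} (h : i ≠ j)
    (hij : ¬(i.val < n - 1 ∧ j.val < n - 1)) : forgetLastGen n ⟨(i, j), h⟩ = 1 :=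
  dif_neg hij

theorem commute_forgetLastGen {i j k m : Fin n} (hjk : j ≠ k) (him : i ≠ m)
    (hij : i ≠ j) (hik : i ≠ k) (hjm : j ≠ m) (hkm : k ≠ m) :
    Commute (forgetLastGen n ⟨(j, k), hjk⟩) (forgetLastGen n ⟨(i, m), him⟩) := by
  by_cases h₁ : j.val < n - 1 ∧ k.val < n - 1
  · by_cases h₂ : i.val < n - 1 ∧ m.val < n - 1
    · rw [forgetLastGen_of_lt hjk h₁.1 h₁.2, forgetLastGen_of_lt him h₂.1 h₂.2]
      exact commute_lam_lam _ _ (Fin.castLT_ne_castLT hij _ _) (Fin.castLT_ne_castLT hik _ _)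
        (Fin.castLT_ne_castLT hjm _ _) (Fin.castLT_ne_castLT hkm _ _)
    · rw [forgetLastGen_of_not_lt him h₂]
      exact Commute.one_right _
  · rw [forgetLastGen_of_not_lt hjk h₁]
    exact Commute.one_left _

theorem forgetLastGen_reidemeisterIII {i j k : Fin n} (hki : k ≠ i) (hkj : k ≠ j)
    (hij : i ≠ j) :
    forgetLastGen n ⟨(k, i), hki⟩ ^ sgn k i * forgetLastGen n ⟨(k, j), hkj⟩ ^ sgn k j *
        forgetLastGen n ⟨(i, j), hij⟩ ^ sgn i j =
      forgetLastGen n ⟨(i, j), hij⟩ ^ sgn i j * forgetLastGen n ⟨(k, j), hkj⟩ ^ sgn k j *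
        forgetLastGen n ⟨(k, i), hki⟩ ^ sgn k i := by
  -- If one index is the last one, two of the three factors vanish and both sides agree.
  by_cases hk : k.val < n - 1
  · by_cases hi : i.val < n - 1
    · by_cases hj : j.val < n - 1
      · rw [forgetLastGen_of_lt hki hk hi, forgetLastGen_of_lt hkj hk hj,
          forgetLastGen_of_lt hij hi hj]
        exact lam_zpow_reidemeisterIII _ _ _
      · rw [forgetLastGen_of_not_lt hkj (fun h => hj h.2),
          forgetLastGen_of_not_lt hij (fun h => hj h.2)]
        simp
    · rw [forgetLastGen_of_not_lt hki (fun h => hi h.2),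
        forgetLastGen_of_not_lt hij (fun h => hi h.1)]
      simp
  · rw [forgetLastGen_of_not_lt hki (fun h => hk h.1),
      forgetLastGen_of_not_lt hkj (fun h => hk h.1)]
    simp

theorem lift_forgetLastGen_eq_one (n : ℕ) :
    ∀ r ∈ vpRels n, FreeGroup.lift (forgetLastGen n) r = 1 := by
  rintro r (⟨i, j, k, m, hjk, him, hij, hik, hjm, hkm, rfl⟩ | ⟨i, j, k, hki, hkj, hij, rfl⟩)
  · simp only [map_mul, map_inv, lift_lamF]
    exact commutatorElement_eq_one_iff_mul_comm.mpr
      (commute_forgetLastGen hjk him hij hik hjm hkm).eq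
  · simp only [map_mul, map_inv, map_zpow, lift_lamF, mul_inv_eq_one]
    exact forgetLastGen_reidemeisterIII hki hkj hij

def forgetLast (n : ℕ) : VP n →* VP (n - 1) :=
  PresentedGroup.toGroup (lift_forgetLastGen_eq_one n)

theorem forgetLast_lam {i j : Fin n} (h : i ≠ j) :
    forgetLast n (lam h) = forgetLastGen n ⟨(i, j), h⟩ :=
  PresentedGroup.toGroup.of _

variable (hn : 0 < n)

theorem lam_mem_normalClosure_VstarSet {i j : Fin n} (h : i ≠ j)
    (hij : ¬(i.val < n - 1 ∧ j.val < n - 1)) :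
    lam h ∈ Subgroup.normalClosure (VstarSet n hn) := by
  apply Subgroup.subset_normalClosure
  rcases not_and_or.mp hij with hi | hj
  · have hi : i = lastIdx n hn := Fin.ext (by simp [lastIdx]; omega)
    subst hi
    exact ⟨j, h.symm, Or.inr rfl⟩
  · have hj : j = lastIdx n hn := Fin.ext (by simp [lastIdx]; omega)
    subst hj
    exact ⟨i, h, Or.inl rfl⟩

theorem normalClosure_VstarSet_le_ker :
    Subgroup.normalClosure (VstarSet n hn) ≤ (forgetLast n).ker := by
  refine Subgroup.normalClosure_le_normal ?_
  rintro _ ⟨i, hi, rfl | rfl⟩ <;>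
    simp only [SetLike.mem_coe, MonoidHom.mem_ker, forgetLast_lam] <;>
    exact forgetLastGen_of_not_lt _ (by simp [lastIdx])

section Inclusion

variable (ι : VP (n - 1) →* VP n)
  (hι : ∀ (a b : Fin (n - 1)) (hab : a ≠ b) (hab' : emb n a ≠ emb n b),
    ι (lam hab) = lam hab')
include hι

theorem forgetLast_leftInverse : Function.LeftInverse (forgetLast n) ι := by
  suffices (forgetLast n).comp ι = MonoidHom.id _ from DFunLike.congr_fun this
  refine PresentedGroup.ext fun ⟨⟨a, b⟩, hab⟩ => ?_
  have hab' : emb n a ≠ emb n b := fun h => hab (Fin.castLE_injective _ h)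
  change forgetLast n (ι (lam hab)) = lam hab
  rw [hι a b hab hab', forgetLast_lam, forgetLastGen_of_lt hab' a.isLt b.isLt]
  rfl

theorem apply_forgetLast_lam_of_lt {i j : Fin n} (h : i ≠ j) (hi : i.val < n - 1)
    (hj : j.val < n - 1) : ι (forgetLast n (lam h)) = lam h := by
  rw [forgetLast_lam, forgetLastGen_of_lt h hi hj, hι _ _ _ (by exact h)]
  rfl

theorem ker_le_normalClosure_VstarSet :
    (forgetLast n).ker ≤ Subgroup.normalClosure (VstarSet n hn) := by
  let q := QuotientGroup.mk' (Subgroup.normalClosure (VstarSet n hn))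
  have hq : (q.comp ι).comp (forgetLast n) = q := by
    refine PresentedGroup.ext fun ⟨⟨i, j⟩, h⟩ => ?_
    change q (ι (forgetLast n (lam h))) = q (lam h)
    by_cases hij : i.val < n - 1 ∧ j.val < n - 1
    · rw [apply_forgetLast_lam_of_lt ι hι h hij.1 hij.2]
    · rw [forgetLast_lam, forgetLastGen_of_not_lt h hij, map_one, map_one, eq_comm]
      exact (QuotientGroup.eq_one_iff _).mpr (lam_mem_normalClosure_VstarSet hn h hij)
  intro b hb
  rw [← QuotientGroup.eq_one_iff]
  change q b = 1
  rw [← hq]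
  simp [MonoidHom.mem_ker.mp hb]

theorem normalClosure_VstarSet_eq_ker :
    Subgroup.normalClosure (VstarSet n hn) = (forgetLast n).ker :=
  le_antisymm (normalClosure_VstarSet_le_ker hn) (ker_le_normalClosure_VstarSet hn ι hι)

end Inclusion

end VP

/-- For `n ≥ 3`, `VP n` is the internal semidirect product `V_n^* ⋊ VP (n-1)`:
`V_n^*` is normal in `VP n`, its intersection with the image of the inclusion
`ι_n : VP (n-1) →* VP n` (determined by `λ_{ij} ↦ λ_{ij}`) is trivial, and every
`b ∈ VP n` factors uniquely as `b = w * ι_n v` with `w ∈ V_n^*` and `v ∈ VP (n-1)`. -/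
theorem stmt_3 (n : ℕ) (hn : 3 ≤ n) (ι : VP (n - 1) →* VP n)
    (hι : ∀ (a b : Fin (n - 1)) (hab : a ≠ b) (hab' : emb n a ≠ emb n b),
      ι (lam hab) = lam hab') :
    (Subgroup.normalClosure (VstarSet n (by omega))).Normal ∧
    Subgroup.normalClosure (VstarSet n (by omega)) ⊓ ι.range = ⊥ ∧
    ∀ b : VP n, ∃! p : Subgroup.normalClosure (VstarSet n (by omega)) × VP (n - 1),
      b = (p.1 : VP n) * ι p.2 := by
  have hker := VP.normalClosure_VstarSet_eq_ker (by omega) ι hι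
  have hretract := VP.forgetLast_leftInverse ι hι
  refine ⟨Subgroup.normalClosure_normal, ?_, ?_⟩
  · rw [hker]
    exact MonoidHom.ker_inf_range_eq_bot_of_leftInverse hretract
  · rw [hker]
    exact MonoidHom.existsUnique_ker_mul_of_leftInverse hretract
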